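/- With U_h as the erf-profile modified-equation solution of the first-order upwind scheme, for any three distinct mesh sizes h_1 > h_2 > h_3 > 0 the ratio ||U_{h_1} - U_{h_3}|| / ||U_{h_2} - U_{h_3}|| equals (√h_1 - √h_3)/(√h_2 - √h_3); consequently σ = 1/2 solves the Richardson extrapolation equation |h_1^σ - h_3^σ|/|h_2^σ - h_3^σ| = ||U_{h_1} - U_{h_3}||/||U_{h_2} - U_{h_3}||, regardless of the ordering of the comparison. -/

import Mathlib

open MeasureTheory Real

noncomputable def erf (ζ : ℝ) : ℝ := (2 / Real.sqrt Real.pi) * ∫ χ in (0:ℝ)..ζ, Real.exp (-χ^2)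

/-!
Writing `s(h) = √(4 ν(h) t_f)`, each `U_h` is the same erf profile at scale `s(h) ∝ √h`, and
`∫ |erf (x / b) - erf (x / c)| dx = 2 |c - b| / √π`. Hence `‖U_h - U_{h₃}‖ ∝ |√h - √h₃|` and the
common factor cancels in the ratio. The integral is computed on `(0, ∞)` by parity, using the
antiderivative `x erf (x / b) + b e^{-(x/b)²} / √π` of `erf (x / b)`; the boundary term at `∞`
vanishes because `erf (x / b) - erf (x / c)` decays like a Gaussian, so no value of `erf (∞)` is
needed.
-/

open Filter Topology Set

lemma continuous_exp_neg_sq : Continuous fun t : ℝ => exp (-t ^ 2) := by fun_prop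

lemma hasDerivAt_erf (z : ℝ) : HasDerivAt erf (2 / √π * exp (-z ^ 2)) z :=
  (continuous_exp_neg_sq.integral_hasStrictDerivAt 0 z).hasDerivAt.const_mul _

lemma erf_zero : erf 0 = 0 := by simp [erf]

lemma erf_neg (z : ℝ) : erf (-z) = -erf z := by
  have h := intervalIntegral.integral_comp_neg (a := 0) (b := z) fun t : ℝ => exp (-t ^ 2)
  simp only [neg_sq, neg_zero] at h
  rw [erf, erf, intervalIntegral.integral_symm, ← h, mul_neg]

lemma erf_sub_erf (u v : ℝ) : erf v - erf u = 2 / √π * ∫ t in u..v, exp (-t ^ 2) := by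
  rw [erf, erf, ← mul_sub, intervalIntegral.integral_interval_sub_left
    (continuous_exp_neg_sq.intervalIntegrable 0 v) (continuous_exp_neg_sq.intervalIntegrable 0 u)]

lemma erf_monotone : Monotone erf := fun u v huv => by
  rw [← sub_nonneg, erf_sub_erf]
  have := intervalIntegral.integral_nonneg (μ := volume) huv fun t _ => (exp_pos (-t ^ 2)).le
  positivity

lemma erf_sub_erf_le {u v : ℝ} (hu : 0 ≤ u) (huv : u ≤ v) :
    erf v - erf u ≤ 2 / √π * ((v - u) * exp (-u ^ 2)) := by
  rw [erf_sub_erf]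
  gcongr
  simpa using intervalIntegral.integral_mono_on huv
    (continuous_exp_neg_sq.intervalIntegrable u v) (intervalIntegrable_const (μ := volume))
    fun t ht => exp_le_exp.2 (neg_le_neg (pow_le_pow_left₀ hu ht.1 2))

lemma erf_div_sub_erf_div_nonneg {b c x : ℝ} (hb : 0 < b) (hbc : b ≤ c) (hx : 0 ≤ x) :
    0 ≤ erf (x / b) - erf (x / c) :=
  sub_nonneg.2 (erf_monotone (div_le_div_of_nonneg_left hx hb hbc))

noncomputable def erfPrimitive (b x : ℝ) : ℝ := x * erf (x / b) + b * exp (-(x / b) ^ 2) / √π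

lemma hasDerivAt_erfPrimitive {b : ℝ} (hb : b ≠ 0) (x : ℝ) :
    HasDerivAt (erfPrimitive b) (erf (x / b)) x := by
  have hdiv : HasDerivAt (fun y : ℝ => y / b) (1 / b) x := by
    simpa using (hasDerivAt_id x).div_const b
  refine (((hasDerivAt_id' x).mul ((hasDerivAt_erf (x / b)).comp x hdiv)).add
    ((((hdiv.pow 2).neg).exp.const_mul b).div_const √π)).congr_deriv ?_
  simp only [Function.comp_apply, Pi.pow_apply, Pi.neg_apply, Nat.cast_ofNat, Nat.add_one_sub_one,
    pow_one]
  field_simp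
  ring

lemma tendsto_exp_neg_div_sq {b : ℝ} (hb : 0 < b) :
    Tendsto (fun x : ℝ => exp (-(x / b) ^ 2)) atTop (𝓝 0) :=
  tendsto_exp_atBot.comp <| tendsto_neg_atBot_iff.2 <|
    (tendsto_pow_atTop two_ne_zero).comp (tendsto_id.atTop_div_const hb)

lemma tendsto_mul_erf_div_sub_erf_div {b c : ℝ} (hb : 0 < b) (hbc : b ≤ c) :
    Tendsto (fun x : ℝ => x * (erf (x / b) - erf (x / c))) atTop (𝓝 0) := by
  have hc : 0 < c := hb.trans_le hbc
  have hgauss : Tendsto (fun x : ℝ => (x / c) ^ 2 * exp (-(x / c) ^ 2)) atTop (𝓝 0) := by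
    simpa [Function.comp_def] using (tendsto_pow_mul_exp_neg_atTop_nhds_zero 1).comp
      ((tendsto_pow_atTop two_ne_zero).comp (tendsto_id.atTop_div_const hc))
  have hbound := (hgauss.const_mul (2 / √π * (1 / b - 1 / c) * c ^ 2))
  rw [mul_zero] at hbound
  refine tendsto_of_tendsto_of_tendsto_of_le_of_le' tendsto_const_nhds hbound ?_ ?_ <;>
    filter_upwards [eventually_ge_atTop 0] with x hx
  · exact mul_nonneg hx (erf_div_sub_erf_div_nonneg hb hbc hx)
  · calc x * (erf (x / b) - erf (x / c))
        ≤ x * (2 / √π * ((x / b - x / c) * exp (-(x / c) ^ 2))) :=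
          mul_le_mul_of_nonneg_left
            (erf_sub_erf_le (by positivity) (div_le_div_of_nonneg_left hx hb hbc)) hx
      _ = 2 / √π * (1 / b - 1 / c) * c ^ 2 * ((x / c) ^ 2 * exp (-(x / c) ^ 2)) := by
          field_simp

lemma tendsto_erfPrimitive_sub {b c : ℝ} (hb : 0 < b) (hbc : b ≤ c) :
    Tendsto (fun x => erfPrimitive b x - erfPrimitive c x) atTop (𝓝 0) := by
  have hc : 0 < c := hb.trans_le hbc
  have h := (tendsto_mul_erf_div_sub_erf_div hb hbc).add
    ((((tendsto_exp_neg_div_sq hb).const_mul b).sub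
      ((tendsto_exp_neg_div_sq hc).const_mul c)).div_const √π)
  simp only [mul_zero, sub_zero, zero_div, add_zero] at h
  convert h using 2 with x
  simp only [erfPrimitive]
  ring

lemma integral_Ioi_erf_div_sub_erf_div {b c : ℝ} (hb : 0 < b) (hbc : b ≤ c) :
    ∫ x in Ioi 0, (erf (x / b) - erf (x / c)) = (c - b) / √π := by
  have hc : 0 < c := hb.trans_le hbc
  rw [integral_Ioi_of_hasDerivAt_of_nonneg'
    (fun x _ => (hasDerivAt_erfPrimitive hb.ne' x).sub (hasDerivAt_erfPrimitive hc.ne' x))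
    (fun x hx => erf_div_sub_erf_div_nonneg hb hbc (le_of_lt hx)) (tendsto_erfPrimitive_sub hb hbc)]
  simp only [Pi.sub_apply, erfPrimitive, zero_div, erf_zero, zero_mul, ne_eq,
    OfNat.ofNat_ne_zero, not_false_eq_true, zero_pow, neg_zero, exp_zero, mul_one, zero_add]
  ring

lemma integral_abs_erf_div_sub_erf_div {b c : ℝ} (hb : 0 < b) (hc : 0 < c) :
    ∫ x, |erf (x / b) - erf (x / c)| = 2 * |c - b| / √π := by
  wlog hbc : b ≤ c generalizing b c
  · rw [abs_sub_comm c]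
    simp_rw [abs_sub_comm (erf (_ / b))]
    exact this hc hb (le_of_not_ge hbc)
  have heven (x : ℝ) : |erf (|x| / b) - erf (|x| / c)| = |erf (x / b) - erf (x / c)| := by
    rcases abs_choice x with hx | hx
    · rw [hx]
    · rw [hx, neg_div, neg_div, erf_neg, erf_neg, ← abs_neg]
      ring_nf
  calc ∫ x, |erf (x / b) - erf (x / c)|
      = ∫ x, |erf (|x| / b) - erf (|x| / c)| := by simp_rw [heven]
    _ = 2 * ∫ x in Ioi 0, |erf (x / b) - erf (x / c)| :=
        integral_comp_abs (f := fun x => |erf (x / b) - erf (x / c)|)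
    _ = 2 * ∫ x in Ioi 0, (erf (x / b) - erf (x / c)) := by
        congr 1
        exact setIntegral_congr_fun measurableSet_Ioi fun x hx =>
          abs_of_nonneg (erf_div_sub_erf_div_nonneg hb hbc (le_of_lt hx))
    _ = 2 * |c - b| / √π := by
        rw [integral_Ioi_erf_div_sub_erf_div hb hbc, abs_of_nonneg (sub_nonneg.2 hbc)]
        ring

lemma integral_abs_erf_profile_sub {b c : ℝ} (hb : 0 < b) (hc : 0 < c) (m A s : ℝ) :
    ∫ x, |(m + A * erf ((x - s) / b)) - (m + A * erf ((x - s) / c))| =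
      |A| * (2 * |c - b| / √π) := by
  simp_rw [add_sub_add_left_eq_sub, ← mul_sub, abs_mul]
  rw [integral_const_mul, integral_sub_right_eq_self (fun x => |erf (x / b) - erf (x / c)|) s,
    integral_abs_erf_div_sub_erf_div hb hc]

theorem stmt7_general (a tf lam uL uR : ℝ) (ha : 0 < a) (htf : 0 < tf)
    (hl1 : lam < 1) (huLR : uL ≠ uR)
    (ν : ℝ → ℝ) (hν : ∀ h, ν h = a * h * (1 - lam) / 2)
    (U : ℝ → ℝ → ℝ)
    (hU : ∀ h x, U h x = (uL + uR)/2 + (uR - uL)/2 * erf ((x - a*tf)/Real.sqrt (4 * ν h * tf)))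
    (h1 h2 h3 : ℝ) (h3p : 0 < h3) (h32 : h3 < h2) (h21 : h2 < h1) :
    (∫ x : ℝ, |U h1 x - U h3 x|) / (∫ x : ℝ, |U h2 x - U h3 x|) =
        (Real.sqrt h1 - Real.sqrt h3) / (Real.sqrt h2 - Real.sqrt h3) ∧
    |h1 ^ ((1:ℝ)/2) - h3 ^ ((1:ℝ)/2)| / |h2 ^ ((1:ℝ)/2) - h3 ^ ((1:ℝ)/2)| =
      (∫ x : ℝ, |U h1 x - U h3 x|) / (∫ x : ℝ, |U h2 x - U h3 x|) := by
  set C := √(2 * a * tf * (1 - lam))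
  have hk : 0 < 2 * a * tf * (1 - lam) := by have := sub_pos.2 hl1; positivity
  have hC : 0 < C := sqrt_pos.2 hk
  have hscale (h : ℝ) : √(4 * ν h * tf) = C * √h := by
    rw [hν, show 4 * (a * h * (1 - lam) / 2) * tf = 2 * a * tf * (1 - lam) * h by ring,
      sqrt_mul hk.le]
  have hdist (h : ℝ) (hh : 0 < h) :
      ∫ x, |U h x - U h3 x| = |uR - uL| * C / √π * |√h - √h3| := by
    simp_rw [hU, hscale]
    rw [integral_abs_erf_profile_sub (by positivity) (by positivity), ← mul_sub, abs_mul,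
      abs_of_pos hC, abs_sub_comm, abs_div, abs_two]
    ring
  have hK : |uR - uL| * C / √π ≠ 0 := by
    have := abs_pos.2 (sub_ne_zero.2 huLR.symm)
    positivity
  have hratio : (∫ x, |U h1 x - U h3 x|) / (∫ x, |U h2 x - U h3 x|) =
      |√h1 - √h3| / |√h2 - √h3| := by
    rw [hdist h1 (by linarith), hdist h2 (by linarith), mul_div_mul_left _ _ hK]
  have hs13 : 0 < √h1 - √h3 := sub_pos.2 (sqrt_lt_sqrt h3p.le (h32.trans h21))
  have hs23 : 0 < √h2 - √h3 := sub_pos.2 (sqrt_lt_sqrt h3p.le h32)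
  simp only [hratio, ← sqrt_eq_rpow, abs_of_pos hs13, abs_of_pos hs23, and_self]

theorem stmt7 (a tf lam uL uR : ℝ) (ha : 0 < a) (htf : 0 < tf)
    (hl0 : 0 < lam) (hl1 : lam < 1) (huLR : uL ≠ uR)
    (ν : ℝ → ℝ) (hν : ∀ h, ν h = a * h * (1 - lam) / 2)
    (U : ℝ → ℝ → ℝ)
    (hU : ∀ h x, U h x = (uL + uR)/2 + (uR - uL)/2 * erf ((x - a*tf)/Real.sqrt (4 * ν h * tf)))
    (h1 h2 h3 : ℝ) (h3p : 0 < h3) (h32 : h3 < h2) (h21 : h2 < h1) :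
    (∫ x : ℝ, |U h1 x - U h3 x|) / (∫ x : ℝ, |U h2 x - U h3 x|) =
        (Real.sqrt h1 - Real.sqrt h3) / (Real.sqrt h2 - Real.sqrt h3) ∧
    |h1 ^ ((1:ℝ)/2) - h3 ^ ((1:ℝ)/2)| / |h2 ^ ((1:ℝ)/2) - h3 ^ ((1:ℝ)/2)| =
      (∫ x : ℝ, |U h1 x - U h3 x|) / (∫ x : ℝ, |U h2 x - U h3 x|) :=
  stmt7_general a tf lam uL uR ha htf hl1 huLR ν hν U hU h1 h2 h3 h3p h32 h21
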